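/- Let k ≥ 1, let n ≥ 2, and let ζ ∈ ℂ be a primitive (2n)-th root of unity. A matrix X : Matrix I_k I_k ℂ commutes with both D(k,ζ) and P_k if and only if: (i) X r s = 0 for all r, s : I_k with |r| ≢ |s| (mod n), and (ii) X (−r) (−s) = X r s for all r, s : I_k. Consequently, the elements E_{r,s} + E_{−r,−s}, taken over pairs r, s with |r| ≡ |s| (mod n) and one representative from each pair {(r,s), (−r,−s)}, form a ℂ-basis of the centralizer algebra Z_k(D_n) = End_{D_n}(V^{⊗k}). -/

import Mathlib

open Matrix

/-- The number of `-1` factors (encoded as `true`) in a simple tensor index. -/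
def wt {k : ℕ} (r : Fin k → Bool) : ℕ := (Finset.univ.filter fun i => r i = true).card

/-- The sign-reversal `-r` of an index, `(−r) i = ¬ (r i)`. -/
def negt {k : ℕ} (r : Fin k → Bool) : Fin k → Bool := fun i => !(r i)

/-- The matrix of `g^{⊗k}` on `V^{⊗k}` for `g = diag(ζ⁻¹, ζ)`. -/
noncomputable def Dmat (k : ℕ) (ζ : ℂ) : Matrix (Fin k → Bool) (Fin k → Bool) ℂ :=
  Matrix.diagonal fun r => ζ ^ ((k : ℤ) - 2 * (wt r : ℤ))

/-- The 0–1 matrix with `P r s = 1` iff `s = −r`; `i^k · P_k` is the matrix of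
`h^{⊗k}` for `h = [[0,i],[i,0]]`. -/
noncomputable def Pmat (k : ℕ) : Matrix (Fin k → Bool) (Fin k → Bool) ℂ :=
  Matrix.of fun r s => if s = negt r then 1 else 0

/-- The centralizer of a matrix `M`, as a submodule of the matrix algebra. -/
noncomputable def commSub {I : Type*} [Fintype I] [DecidableEq I] (M : Matrix I I ℂ) :
    Submodule ℂ (Matrix I I ℂ) where
  carrier := {X | X * M = M * X}
  add_mem' := by
    intro a b ha hb
    simp only [Set.mem_setOf_eq] at *
    rw [add_mul, mul_add, ha, hb]
  zero_mem' := by simp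
  smul_mem' := by
    intro c X hX
    simp only [Set.mem_setOf_eq] at *
    rw [smul_mul_assoc, mul_smul_comm, hX]

/-!
`D(k,ζ)` is diagonal with entries `ζ^(k - 2|r|)`, and since `ζ` has order `2n` two of them agree
exactly when `|r| ≡ |s| (mod n)`; so `X` commutes with `D(k,ζ)` iff it vanishes off that relation.
`P_k` is the permutation matrix of `r ↦ -r`, so `X` commutes with it iff `X (-r) (-s) = X r s`.
The centralizer is therefore the space of `-`-invariant matrices supported on a `-`-stable
relation, and reading off the entries at a set `S` of orbit representatives of
`(r, s) ↦ (-r, -s)` is a linear isomorphism onto `S → ℂ`; it sends `E_{r,s} + E_{-r,-s}` to the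
indicator of `(r, s)`, because `(-r, -s) ∉ S`.
-/

section SupportedInvariant

variable {I : Type*} [DecidableEq I] (K : Type*) [Semiring K]

def supportedInvariantSubmodule (σ : I → I) (R : I → I → Prop) :
    Submodule K (Matrix I I K) where
  carrier := {X | (∀ r s, ¬ R r s → X r s = 0) ∧ ∀ r s, X (σ r) (σ s) = X r s}
  add_mem' ha hb :=
    ⟨fun r s h => by simp [ha.1 r s h, hb.1 r s h], fun r s => by simp [ha.2, hb.2]⟩
  zero_mem' := ⟨fun _ _ _ => rfl, fun _ _ => rfl⟩
  smul_mem' c _ hX := ⟨fun r s h => by simp [hX.1 r s h], fun r s => by simp [hX.2]⟩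

variable {K}

def symmSingle (σ : I → I) (r s : I) : Matrix I I K :=
  single r s 1 + single (σ r) (σ s) 1

theorem symmSingle_apply (σ : I → I) (r s r' s' : I) :
    (symmSingle σ r s : Matrix I I K) r' s' =
      (if (r, s) = (r', s') then 1 else 0) + if (σ r, σ s) = (r', s') then 1 else 0 := by
  simp [symmSingle, single_apply]

variable {σ : I → I} {R : I → I → Prop}

theorem symmSingle_mem (hσ : Function.Involutive σ) (hR : ∀ r s, R r s → R (σ r) (σ s))
    {r s : I} (h : R r s) : symmSingle σ r s ∈ supportedInvariantSubmodule K σ R := by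
  refine ⟨fun r' s' h' => ?_, fun r' s' => ?_⟩
  · have h₁ : (r, s) ≠ (r', s') := by rintro ⟨⟩; exact h' h
    have h₂ : (σ r, σ s) ≠ (r', s') := by
      rintro ⟨⟩; exact h' (by simpa [hσ r, hσ s] using hR _ _ h)
    simp [symmSingle_apply, h₁, h₂]
  · have e₁ : (r, s) = (σ r', σ s') ↔ (σ r, σ s) = (r', s') := by
      simp only [Prod.mk.injEq, hσ.eq_iff, @eq_comm _ r, @eq_comm _ s]
    have e₂ : (σ r, σ s) = (σ r', σ s') ↔ (r, s) = (r', s') := by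
      simp only [Prod.mk.injEq, hσ.injective.eq_iff]
    simp only [symmSingle_apply, e₁, e₂, add_comm]

variable {S : Finset (I × I)}

theorem symmSingle_apply_of_mem (hS : ∀ p ∈ S, R p.1 p.2)
    (hSR : ∀ r s, R r s → ((r, s) ∈ S ↔ (σ r, σ s) ∉ S)) {p q : I × I} (hp : p ∈ S) (hq : q ∈ S) :
    (symmSingle σ p.1 p.2 : Matrix I I K) q.1 q.2 = if p = q then 1 else 0 := by
  have hσp : (σ p.1, σ p.2) ≠ q := fun h => (hSR _ _ (hS p hp)).mp hp (h ▸ hq)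
  simp [symmSingle_apply, hσp]

theorem eq_of_mem_supportedInvariantSubmodule
    (hSR : ∀ r s, R r s → ((r, s) ∈ S ↔ (σ r, σ s) ∉ S)) {X Y : Matrix I I K}
    (hX : X ∈ supportedInvariantSubmodule K σ R) (hY : Y ∈ supportedInvariantSubmodule K σ R)
    (h : ∀ p ∈ S, X p.1 p.2 = Y p.1 p.2) : X = Y := by
  ext r s
  by_cases hrs : R r s
  · by_cases hmem : (r, s) ∈ S
    · exact h _ hmem
    · rw [← hX.2, ← hY.2]
      exact h _ (not_not.mp (mt (hSR r s hrs).mpr hmem))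
  · rw [hX.1 r s hrs, hY.1 r s hrs]

theorem exists_basis_supportedInvariantSubmodule (hσ : Function.Involutive σ)
    (hR : ∀ r s, R r s → R (σ r) (σ s)) (hS : ∀ p ∈ S, R p.1 p.2)
    (hSR : ∀ r s, R r s → ((r, s) ∈ S ↔ (σ r, σ s) ∉ S)) :
    ∃ b : Module.Basis S K (supportedInvariantSubmodule K σ R),
      ∀ p : S, (b p : Matrix I I K) = symmSingle σ p.1.1 p.1.2 := by
  classical
  let W := supportedInvariantSubmodule K σ R
  let B (p : S) : W := ⟨symmSingle σ p.1.1 p.1.2, symmSingle_mem hσ hR (hS p.1 p.2)⟩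
  let E : W →ₗ[K] S → K :=
    { toFun X p := (X : Matrix I I K) p.1.1 p.1.2
      map_add' _ _ := rfl
      map_smul' _ _ := rfl }
  have hEB (p : S) : E (B p) = Pi.single p 1 := by
    ext q
    exact (symmSingle_apply_of_mem hS hSR p.2 q.2).trans (by simp [Pi.single_apply, eq_comm])
  have hE : Function.Bijective E := by
    refine ⟨fun X Y hXY => ?_, fun c => ?_⟩
    · exact Subtype.ext <| eq_of_mem_supportedInvariantSubmodule hSR X.2 Y.2
        fun p hp => congr_fun hXY ⟨p, hp⟩
    · refine ⟨∑ p, c p • B p, ?_⟩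
      ext q
      simp [hEB, Pi.single_apply]
  refine ⟨.ofEquivFun (LinearEquiv.ofBijective E hE), fun p => ?_⟩
  rw [Module.Basis.coe_ofEquivFun]
  exact congrArg Subtype.val (((LinearEquiv.ofBijective E hE).symm_apply_eq).mpr (hEB p).symm)

end SupportedInvariant

theorem Matrix.mul_diagonal_eq_diagonal_mul_iff {I K : Type*} [Fintype I] [DecidableEq I]
    [CommRing K] [IsDomain K] (X : Matrix I I K) (d : I → K) :
    X * diagonal d = diagonal d * X ↔ ∀ r s, d r ≠ d s → X r s = 0 := by
  rw [← Matrix.ext_iff]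
  refine forall₂_congr fun r s => ?_
  rw [mul_diagonal, diagonal_mul, mul_comm, mul_eq_mul_right_iff, eq_comm, or_iff_not_imp_left]

theorem Equiv.Perm.mul_toMatrix_eq_toMatrix_mul_iff {I K : Type*} [Fintype I] [DecidableEq I]
    [Semiring K] (σ : Equiv.Perm I) (X : Matrix I I K) :
    X * σ.toPEquiv.toMatrix = σ.toPEquiv.toMatrix * X ↔ ∀ r s, X (σ r) (σ s) = X r s := by
  rw [PEquiv.mul_toMatrix_toPEquiv, PEquiv.toMatrix_toPEquiv_mul, ← Matrix.ext_iff]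
  simp only [submatrix_apply, id]
  refine ⟨fun h r s => ?_, fun h r s => ?_⟩
  · simpa using (h r (σ s)).symm
  · simpa using (h r (σ.symm s)).symm

theorem IsPrimitiveRoot.zpow_sub_two_mul_eq_iff {G : Type*} [CommGroupWithZero G] {ζ : G} {n : ℕ}
    (hζ : IsPrimitiveRoot ζ (2 * n)) (hn : n ≠ 0) (c : ℤ) (a b : ℕ) :
    ζ ^ (c - 2 * (a : ℤ)) = ζ ^ (c - 2 * (b : ℤ)) ↔ a ≡ b [MOD n] := by
  have hζ0 : ζ ≠ 0 := hζ.ne_zero (by positivity)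
  rw [← div_eq_one_iff_eq (zpow_ne_zero _ hζ0), ← zpow_sub₀ hζ0, hζ.zpow_eq_one_iff_dvd,
    Nat.modEq_iff_dvd, show c - 2 * (a : ℤ) - (c - 2 * b) = 2 * (b - a) by ring]
  push_cast
  exact mul_dvd_mul_iff_left two_ne_zero

theorem negt_involutive (k : ℕ) : Function.Involutive (negt (k := k)) :=
  fun r => funext fun i => Bool.not_not (r i)

theorem wt_add_wt_negt {k : ℕ} (r : Fin k → Bool) : wt r + wt (negt r) = k := by
  simpa [wt, negt] using Finset.card_filter_add_card_filter_not (s := Finset.univ) (r · = true)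

theorem Nat.ModEq.wt_negt {k n : ℕ} {r s : Fin k → Bool} (h : wt r ≡ wt s [MOD n]) :
    wt (negt r) ≡ wt (negt s) [MOD n] :=
  h.add_left_cancel (by rw [wt_add_wt_negt, wt_add_wt_negt])

def negtPerm (k : ℕ) : Equiv.Perm (Fin k → Bool) := (negt_involutive k).toPerm

theorem Pmat_eq_toMatrix (k : ℕ) : Pmat k = (negtPerm k).toPEquiv.toMatrix := by
  ext r s
  simp [Pmat, negtPerm, eq_comm]

theorem commute_Dmat_Pmat_iff {k n : ℕ} (hn : n ≠ 0) {ζ : ℂ} (hζ : IsPrimitiveRoot ζ (2 * n))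
    (X : Matrix (Fin k → Bool) (Fin k → Bool) ℂ) :
    (X * Dmat k ζ = Dmat k ζ * X ∧ X * Pmat k = Pmat k * X) ↔
      ((∀ r s, ¬ wt r ≡ wt s [MOD n] → X r s = 0) ∧ ∀ r s, X (negt r) (negt s) = X r s) := by
  rw [Dmat, mul_diagonal_eq_diagonal_mul_iff, Pmat_eq_toMatrix,
    Equiv.Perm.mul_toMatrix_eq_toMatrix_mul_iff]
  simp only [ne_eq, hζ.zpow_sub_two_mul_eq_iff hn]
  rfl

theorem commSub_Dmat_inf_commSub_Pmat {k n : ℕ} (hn : n ≠ 0) {ζ : ℂ}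
    (hζ : IsPrimitiveRoot ζ (2 * n)) :
    commSub (Dmat k ζ) ⊓ commSub (Pmat k) =
      supportedInvariantSubmodule ℂ negt fun r s => wt r ≡ wt s [MOD n] :=
  Submodule.ext fun X => commute_Dmat_Pmat_iff hn hζ X

theorem stmt7_general (k n : ℕ) (hn : 2 ≤ n) (ζ : ℂ)
    (hζ : IsPrimitiveRoot ζ (2 * n)) :
    (∀ X : Matrix (Fin k → Bool) (Fin k → Bool) ℂ,
      (X * Dmat k ζ = Dmat k ζ * X ∧ X * Pmat k = Pmat k * X) ↔
        ((∀ r s : Fin k → Bool, ¬ (wt r ≡ wt s [MOD n]) → X r s = 0) ∧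
          ∀ r s : Fin k → Bool, X (negt r) (negt s) = X r s)) ∧
    ∀ S : Finset ((Fin k → Bool) × (Fin k → Bool)),
      (∀ p ∈ S, wt p.1 ≡ wt p.2 [MOD n]) →
      (∀ r s : Fin k → Bool, wt r ≡ wt s [MOD n] →
        ((r, s) ∈ S ↔ (negt r, negt s) ∉ S)) →
      ∃ b : Module.Basis {p // p ∈ S} ℂ ↥(commSub (Dmat k ζ) ⊓ commSub (Pmat k)),
        ∀ p : {p // p ∈ S}, (b p : Matrix (Fin k → Bool) (Fin k → Bool) ℂ) =
          Matrix.single p.1.1 p.1.2 1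
            + Matrix.single (negt p.1.1) (negt p.1.2) 1 := by
  have hn0 : n ≠ 0 := by omega
  refine ⟨commute_Dmat_Pmat_iff hn0 hζ, fun S hS hSR => ?_⟩
  rw [commSub_Dmat_inf_commSub_Pmat hn0 hζ]
  exact exists_basis_supportedInvariantSubmodule (negt_involutive k)
    (fun _ _ h => h.wt_negt) hS hSR

theorem stmt7 (k n : ℕ) (hk : 1 ≤ k) (hn : 2 ≤ n) (ζ : ℂ)
    (hζ : IsPrimitiveRoot ζ (2 * n)) :
    (∀ X : Matrix (Fin k → Bool) (Fin k → Bool) ℂ,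
      (X * Dmat k ζ = Dmat k ζ * X ∧ X * Pmat k = Pmat k * X) ↔
        ((∀ r s : Fin k → Bool, ¬ (wt r ≡ wt s [MOD n]) → X r s = 0) ∧
          ∀ r s : Fin k → Bool, X (negt r) (negt s) = X r s)) ∧
    ∀ S : Finset ((Fin k → Bool) × (Fin k → Bool)),
      (∀ p ∈ S, wt p.1 ≡ wt p.2 [MOD n]) →
      (∀ r s : Fin k → Bool, wt r ≡ wt s [MOD n] →
        ((r, s) ∈ S ↔ (negt r, negt s) ∉ S)) →
      ∃ b : Module.Basis {p // p ∈ S} ℂ ↥(commSub (Dmat k ζ) ⊓ commSub (Pmat k)),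
        ∀ p : {p // p ∈ S}, (b p : Matrix (Fin k → Bool) (Fin k → Bool) ℂ) =
          Matrix.single p.1.1 p.1.2 1
            + Matrix.single (negt p.1.1) (negt p.1.2) 1 :=
  stmt7_general k n hn ζ hζ
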